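/- Every path-double split graph G has exactly one skew partition, namely (A ∪ B ∪ E, C ∪ D), and this skew partition is not balanced. -/

import Mathlib

open SimpleGraph

universe u

namespace BSP

variable {V : Type*}

/-- A walk is induced: any two adjacent vertices of its support are consecutive on it. -/
def IsInducedWalk (G : SimpleGraph V) {u v : V} (p : G.Walk u v) : Prop :=
  ∀ x ∈ p.support, ∀ y ∈ p.support, G.Adj x y → s(x, y) ∈ p.edges

/-- An induced path. -/
def IsInducedPath (G : SimpleGraph V) {u v : V} (p : G.Walk u v) : Prop :=
  p.IsPath ∧ IsInducedWalk G p

/-- An induced cycle. -/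
def IsInducedCycle (G : SimpleGraph V) {u : V} (p : G.Walk u u) : Prop :=
  p.IsCycle ∧ IsInducedWalk G p

/-- `G` has an odd hole: an induced odd cycle of length at least 5. -/
def HasOddHole (G : SimpleGraph V) : Prop :=
  ∃ (u : V) (p : G.Walk u u), IsInducedCycle G p ∧ Odd p.length ∧ 5 ≤ p.length

/-- A graph is Berge if neither it nor its complement has an odd hole. -/
def Berge (G : SimpleGraph V) : Prop := ¬ HasOddHole G ∧ ¬ HasOddHole Gᶜ

/-- `x` is an interior vertex of the walk `p`. -/
def Interior {G : SimpleGraph V} {u v : V} (p : G.Walk u v) (x : V) : Prop :=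
  x ∈ p.support ∧ x ≠ u ∧ x ≠ v

/-- A skew partition `(A, B)` of `G`. -/
def IsSkewPartition (G : SimpleGraph V) (A B : Set V) : Prop :=
  A.Nonempty ∧ B.Nonempty ∧ Disjoint A B ∧ A ∪ B = Set.univ ∧
  ¬ (G.induce A).Connected ∧ ¬ ((Gᶜ).induce B).Connected

/-- A balanced skew partition. -/
def IsBalancedSkewPartition (G : SimpleGraph V) (A B : Set V) : Prop :=
  IsSkewPartition G A B ∧
  (∀ (x y : V) (p : G.Walk x y), IsInducedPath G p → 2 ≤ p.length →
     x ∈ B → y ∈ B → (∀ z, Interior p z → z ∈ A) → Even p.length) ∧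
  (∀ (x y : V) (q : (Gᶜ).Walk x y), IsInducedPath Gᶜ q → 2 ≤ q.length →
     x ∈ A → y ∈ A → (∀ z, Interior q z → z ∈ B) → Even q.length)

def HasBalancedSkewPartition (G : SimpleGraph V) : Prop :=
  ∃ A B : Set V, IsBalancedSkewPartition G A B

def IsSkewCutset (G : SimpleGraph V) (B : Set V) : Prop :=
  IsSkewPartition G Bᶜ B

def IsBalancedSkewCutset (G : SimpleGraph V) (B : Set V) : Prop :=
  IsBalancedSkewPartition G Bᶜ B

/-- `C` is a cutset of `G`. -/
def IsCutset (G : SimpleGraph V) (C : Set V) : Prop :=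
  ¬ (G.induce (Cᶜ : Set V)).Connected

/-- A star: a set with a vertex adjacent to all the others in it. -/
def IsStar (G : SimpleGraph V) (B : Set V) : Prop :=
  ∃ x ∈ B, ∀ y ∈ B, y ≠ x → G.Adj x y

def HasStarCutset (G : SimpleGraph V) : Prop :=
  ∃ B : Set V, IsStar G B ∧ IsCutset G B

/-- A 2-join of `G` with split `(X1, X2, A1, B1, A2, B2)`. -/
def IsTwoJoinSplit (G : SimpleGraph V) (X1 X2 A1 B1 A2 B2 : Set V) : Prop :=
  Disjoint X1 X2 ∧ X1 ∪ X2 = Set.univ ∧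
  A1 ⊆ X1 ∧ B1 ⊆ X1 ∧ A2 ⊆ X2 ∧ B2 ⊆ X2 ∧
  Disjoint A1 B1 ∧ Disjoint A2 B2 ∧
  A1.Nonempty ∧ B1.Nonempty ∧ A2.Nonempty ∧ B2.Nonempty ∧
  (∀ a1 ∈ A1, ∀ a2 ∈ A2, G.Adj a1 a2) ∧
  (∀ b1 ∈ B1, ∀ b2 ∈ B2, G.Adj b1 b2) ∧
  (∀ x ∈ X1, ∀ y ∈ X2, G.Adj x y → (x ∈ A1 ∧ y ∈ A2) ∨ (x ∈ B1 ∧ y ∈ B2))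

/-- Reachability inside a set of vertices. -/
def ReachIn (G : SimpleGraph V) (S : Set V) (u v : V) : Prop :=
  ∃ p : G.Walk u v, ∀ x ∈ p.support, x ∈ S

/-- Every component of `G[X]` meets both `A` and `B`. -/
def SideConnected (G : SimpleGraph V) (X A B : Set V) : Prop :=
  ∀ v ∈ X, (∃ a ∈ A, ReachIn G X v a) ∧ (∃ b ∈ B, ReachIn G X v b)

def IsConnectedTwoJoin (G : SimpleGraph V) (X1 X2 A1 B1 A2 B2 : Set V) : Prop :=
  IsTwoJoinSplit G X1 X2 A1 B1 A2 B2 ∧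
  SideConnected G X1 A1 B1 ∧ SideConnected G X2 A2 B2

/-- `X` has at least 3 vertices and is not a path of length 2 from `A` to `B`
with interior in `X \ (A ∪ B)`. -/
def SideSubstantial (G : SimpleGraph V) (X A B : Set V) : Prop :=
  3 ≤ X.ncard ∧
  ¬ ∃ a ∈ A, ∃ b ∈ B, ∃ c ∈ X \ (A ∪ B),
      X = {a, c, b} ∧ G.Adj a c ∧ G.Adj c b ∧ ¬ G.Adj a b

def IsSubstantialTwoJoin (G : SimpleGraph V) (X1 X2 A1 B1 A2 B2 : Set V) : Prop :=
  IsTwoJoinSplit G X1 X2 A1 B1 A2 B2 ∧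
  SideSubstantial G X1 A1 B1 ∧ SideSubstantial G X2 A2 B2

def IsProperTwoJoin (G : SimpleGraph V) (X1 X2 A1 B1 A2 B2 : Set V) : Prop :=
  IsConnectedTwoJoin G X1 X2 A1 B1 A2 B2 ∧
  SideSubstantial G X1 A1 B1 ∧ SideSubstantial G X2 A2 B2

/-- A degenerate 2-join. -/
def IsDegenerate (G : SimpleGraph V) (X1 X2 A1 B1 A2 B2 : Set V) : Prop :=
  (∃ v ∈ A1, ∀ w ∈ X1 \ A1, ¬ G.Adj v w) ∨
  (∃ v ∈ B1, ∀ w ∈ X1 \ B1, ¬ G.Adj v w) ∨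
  (∃ v ∈ A2, ∀ w ∈ X2 \ A2, ¬ G.Adj v w) ∨
  (∃ v ∈ B2, ∀ w ∈ X2 \ B2, ¬ G.Adj v w) ∨
  IsSkewCutset G (A1 ∪ A2) ∨ IsSkewCutset G (B1 ∪ B2) ∨
  ¬ (SideConnected G X1 A1 B1 ∧ SideConnected G X2 A2 B2) ∨
  (∃ v ∈ A1, ∀ w ∈ B1, G.Adj v w) ∨ (∃ v ∈ B1, ∀ w ∈ A1, G.Adj v w) ∨
  (∃ v ∈ A2, ∀ w ∈ B2, G.Adj v w) ∨ (∃ v ∈ B2, ∀ w ∈ A2, G.Adj v w) ∨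
  (∃ v ∈ X1 \ (A1 ∪ B1), ∀ w ∈ A1 ∪ B1, G.Adj v w) ∨
  (∃ v ∈ X2 \ (A2 ∪ B2), ∀ w ∈ A2 ∪ B2, G.Adj v w)

/-- An induced path from `A` to `B` with no interior vertex in `A ∪ B`. -/
def CrossPath (G : SimpleGraph V) (A B : Set V) {u v : V} (p : G.Walk u v) : Prop :=
  IsInducedPath G p ∧ u ∈ A ∧ v ∈ B ∧ ∀ x, Interior p x → x ∉ A ∪ B

/-- An induced path of length at least 2 with both ends in `S` and no interior vertex in `S`. -/
def OutgoingPath (G : SimpleGraph V) (S : Set V) {u v : V} (p : G.Walk u v) : Prop :=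
  IsInducedPath G p ∧ 2 ≤ p.length ∧ u ∈ S ∧ v ∈ S ∧ ∀ x, Interior p x → x ∉ S

def claw : SimpleGraph (Fin 1 ⊕ Fin 3) := completeBipartiteGraph (Fin 1) (Fin 3)

def diamond : SimpleGraph (Fin 4) := (⊤ : SimpleGraph (Fin 4)).deleteEdges {s(0, 1)}

def ClawFree (G : SimpleGraph V) : Prop := IsEmpty (claw ↪g G)

def DiamondFree (G : SimpleGraph V) : Prop := IsEmpty (diamond ↪g G)

def IsLineGraphOfBipartite {V : Type u} (G : SimpleGraph V) : Prop :=
  ∃ (W : Type u) (H : SimpleGraph W), H.Colorable 2 ∧ Nonempty (G ≃g H.lineGraph)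

/-- Double split graph structure. -/
structure IsDoubleSplit (G : SimpleGraph V) (m n : ℕ)
    (a b : Fin m → V) (c d : Fin n → V) : Prop where
  hm : 2 ≤ m
  hn : 2 ≤ n
  inj : Function.Injective (Sum.elim (Sum.elim a b) (Sum.elim c d))
  cover : Set.range a ∪ Set.range b ∪ Set.range c ∪ Set.range d = Set.univ
  hab : ∀ i, G.Adj (a i) (b i)
  habne : ∀ i i', i ≠ i' →
    ¬ G.Adj (a i) (a i') ∧ ¬ G.Adj (a i) (b i') ∧ ¬ G.Adj (b i) (b i')
  hcd : ∀ j, ¬ G.Adj (c j) (d j)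
  hcdall : ∀ j j', j ≠ j' →
    G.Adj (c j) (c j') ∧ G.Adj (c j) (d j') ∧ G.Adj (d j) (d j')
  cross : ∀ i j,
    (G.Adj (a i) (c j) ∧ G.Adj (b i) (d j) ∧ ¬ G.Adj (a i) (d j) ∧ ¬ G.Adj (b i) (c j)) ∨
    (G.Adj (a i) (d j) ∧ G.Adj (b i) (c j) ∧ ¬ G.Adj (a i) (c j) ∧ ¬ G.Adj (b i) (d j))

/-- Path-double split graph structure. -/
structure IsPathDoubleSplit (G : SimpleGraph V) (m n : ℕ)
    (a b : Fin m → V) (c d : Fin n → V) (E : Set V) : Prop where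
  hm : 2 ≤ m
  hn : 2 ≤ n
  inj : Function.Injective (Sum.elim (Sum.elim a b) (Sum.elim c d))
  notinE : ∀ i, a i ∉ E ∧ b i ∉ E
  notinE' : ∀ j, c j ∉ E ∧ d j ∉ E
  cover : Set.range a ∪ Set.range b ∪ Set.range c ∪ Set.range d ∪ E = Set.univ
  hE : ∀ v ∈ E, (G.neighborSet v).ncard = 2 ∧
    ∃ (i : Fin m) (p : G.Walk (a i) (b i)), IsInducedPath G p ∧ Odd p.length ∧
      (∀ x, Interior p x → x ∈ E) ∧ v ∈ p.support
  hpath : ∀ i, ∃! p : G.Walk (a i) (b i),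
    IsInducedPath G p ∧ Odd p.length ∧ (∀ x, Interior p x → x ∈ E)
  habne : ∀ i i', i ≠ i' →
    ¬ G.Adj (a i) (a i') ∧ ¬ G.Adj (a i) (b i') ∧ ¬ G.Adj (b i) (b i')
  hcd : ∀ j, ¬ G.Adj (c j) (d j)
  hcdall : ∀ j j', j ≠ j' →
    G.Adj (c j) (c j') ∧ G.Adj (c j) (d j') ∧ G.Adj (d j) (d j')
  cross : ∀ i j,
    (G.Adj (a i) (c j) ∧ G.Adj (b i) (d j) ∧ ¬ G.Adj (a i) (d j) ∧ ¬ G.Adj (b i) (c j)) ∨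
    (G.Adj (a i) (d j) ∧ G.Adj (b i) (c j) ∧ ¬ G.Adj (a i) (c j) ∧ ¬ G.Adj (b i) (d j))

/-- Path-cobipartite graph. -/
def IsPathCobipartite (G : SimpleGraph V) : Prop :=
  Berge G ∧ ∃ A B P : Set V,
    Disjoint A B ∧ Disjoint A P ∧ Disjoint B P ∧ A ∪ B ∪ P = Set.univ ∧
    A.Nonempty ∧ B.Nonempty ∧ G.IsClique A ∧ G.IsClique B ∧
    ∀ v ∈ P, (G.neighborSet v).ncard = 2 ∧
      ∃ a ∈ A, ∃ b ∈ B, ∃ p : G.Walk a b, IsInducedPath G p ∧ Odd p.length ∧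
        Interior p v ∧ (∀ x, Interior p x → x ∈ P) ∧
        (∀ w, G.Adj a w → w ∈ A ∪ P) ∧ (∀ w, G.Adj b w → w ∈ B ∪ P) ∧
        (∀ (a' b' : V), a' ∈ A → b' ∈ B → ∀ p' : G.Walk a' b',
          IsInducedPath G p' → Odd p'.length → Interior p' v →
          (∀ x, Interior p' x → x ∈ P) →
          {x | x ∈ p'.support} = {x | x ∈ p.support})

/-- `X` induces a path of `G` with one end in `A`, the other in `B` and interior
outside `A ∪ B`. -/
def PathSideOn (G : SimpleGraph V) (X A B : Set V) : Prop :=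
  ∃ a ∈ A, ∃ b ∈ B, ∃ p : G.Walk a b, IsInducedPath G p ∧
    {x | x ∈ p.support} = X ∧ ∀ x, Interior p x → x ∉ A ∪ B

/-- The block of a 2-join: keep the side `X` (with attachments `A`, `B`) and replace the
other side by a path `p_0, …, p_k`, `p_0` complete to `A` and `p_k` complete to `B`. -/
def blockGraph (G : SimpleGraph V) (X A B : Set V) (k : ℕ) :
    SimpleGraph (↥X ⊕ Fin (k + 1)) where
  Adj x y :=
    match x, y with
    | Sum.inl u, Sum.inl v => G.Adj u v
    | Sum.inl u, Sum.inr i => ((i : ℕ) = 0 ∧ (u : V) ∈ A) ∨ ((i : ℕ) = k ∧ (u : V) ∈ B)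
    | Sum.inr i, Sum.inl u => ((i : ℕ) = 0 ∧ (u : V) ∈ A) ∨ ((i : ℕ) = k ∧ (u : V) ∈ B)
    | Sum.inr i, Sum.inr j => (i : ℕ) + 1 = (j : ℕ) ∨ (j : ℕ) + 1 = (i : ℕ)
  symm := by
    constructor
    rintro (u | i) (v | j) h
    · exact h.symm
    · exact h
    · exact h
    · omega
  loopless := by
    constructor
    rintro (u | i) h
    · exact G.irrefl h
    · omega

/-- The graph `G'` obtained from a Bienstock graph `G` by adding two vertices
(`Sum.inr false` and `Sum.inr true`), each adjacent exactly to `u` and `s`. -/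
def bienstockExt (G : SimpleGraph V) (u s : V) : SimpleGraph (V ⊕ Bool) where
  Adj x y :=
    match x, y with
    | Sum.inl p, Sum.inl q => G.Adj p q
    | Sum.inl p, Sum.inr _ => p = u ∨ p = s
    | Sum.inr _, Sum.inl q => q = u ∨ q = s
    | Sum.inr _, Sum.inr _ => False
  symm := by
    constructor
    rintro (p | i) (q | j) h
    · exact h.symm
    · exact h
    · exact h
    · exact h
  loopless := by
    constructor
    rintro (p | i) h
    · exact G.irrefl h
    · exact h

end BSP

/-!
Write `T = A ∪ B ∪ E` (the path side), `K = C ∪ D` (the pair side) and `P i` for the path from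
`a i` to `b i`. A vertex of `E` has both its neighbours on its own path, so the paths are
disjoint and no edge joins two of them: `G[T]` is disconnected. The complement of `G[K]` is the
matching of the pairs `{c j, d j}`, so `(T, K)` is a skew partition. It is not balanced: a pair
vertex seeing `a i` and its partner, which sees `b i`, extend `P i` to an odd induced path with
both ends in `K`.

For uniqueness let `(X, Y)` be a skew partition. As the complement of `G[Y]` is disconnected,
each `t ∈ Y` has a neighbour `w ∈ Y` such that every non-edge of `Y` lies in the neighbourhood
of `t` or in that of `w`. For `t ∈ T` this confines `Y` so much that `G[X]` is connected, with a
pair vertex outside `Y` as a hub. Hence `Y ⊆ K`, and then any vertex of `K` outside `Y` would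
again be a hub of `G[X]`; so `Y = K`.
-/

namespace SimpleGraph.Walk

variable {V : Type*} {G : SimpleGraph V} [DecidableEq V] {u v x y z : V}

theorem IsPath.eq_of_mem_takeUntil_of_mem_dropUntil {p : G.Walk u v} (hp : p.IsPath)
    (hx : x ∈ p.support) (h₁ : z ∈ (p.takeUntil x hx).support)
    (h₂ : z ∈ (p.dropUntil x hx).support) : z = x := by
  have hnd := hp.support_nodup
  rw [← p.take_spec hx, support_append] at hnd
  rw [← cons_tail_support] at h₂
  exact (List.mem_cons.mp h₂).resolve_right (List.disjoint_of_nodup_append hnd h₁)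

theorem IsPath.mem_takeUntil_iff_of_mem_edges {p : G.Walk u v} (hp : p.IsPath)
    (hx : x ∈ p.support) (he : s(y, z) ∈ p.edges) (hy : y ≠ x) (hz : z ≠ x) :
    y ∈ (p.takeUntil x hx).support ↔ z ∈ (p.takeUntil x hx).support := by
  rw [← p.take_spec hx, edges_append, List.mem_append] at he
  rcases he with he | he
  · exact iff_of_true (fst_mem_support_of_mem_edges _ he) (snd_mem_support_of_mem_edges _ he)
  · exact iff_of_false
      (fun h => hy (hp.eq_of_mem_takeUntil_of_mem_dropUntil hx h
        (fst_mem_support_of_mem_edges _ he)))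
      (fun h => hz (hp.eq_of_mem_takeUntil_of_mem_dropUntil hx h
        (snd_mem_support_of_mem_edges _ he)))

end SimpleGraph.Walk

namespace BSP

section Reach

variable {V : Type*} {G : SimpleGraph V} {X Y : Set V} {t u v w x y : V}

theorem ReachIn.mem_right : ReachIn G X u v → v ∈ X
  | ⟨p, hp⟩ => hp v p.end_mem_support

theorem ReachIn.refl (hu : u ∈ X) : ReachIn G X u u := ⟨.nil, by simpa⟩

theorem ReachIn.symm : ReachIn G X u v → ReachIn G X v u
  | ⟨p, hp⟩ => ⟨p.reverse, by simpa using hp⟩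

theorem ReachIn.trans : ReachIn G X u v → ReachIn G X v w → ReachIn G X u w
  | ⟨p, hp⟩, ⟨q, hq⟩ => ⟨p.append q, by simp only [Walk.mem_support_append_iff]; grind⟩

theorem ReachIn.of_adj (hu : u ∈ X) (hv : v ∈ X) (h : G.Adj u v) : ReachIn G X u v :=
  ⟨.cons h .nil, by simp [hu, hv]⟩

theorem reachIn_of_mem_support (p : G.Walk u v) (hp : ∀ z ∈ p.support, z ∈ X)
    (hx : x ∈ p.support) (hy : y ∈ p.support) : ReachIn G X x y := by
  classical
  have hu (z) (hz : z ∈ p.support) : ReachIn G X u z :=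
    ⟨p.takeUntil z hz, fun _ h => hp _ (p.support_takeUntil_subset_support hz h)⟩
  exact (hu x hx).symm.trans (hu y hy)

theorem connected_induce_of_forall_reachIn (hw : w ∈ X) (h : ∀ x ∈ X, ReachIn G X x w) :
    (G.induce X).Connected := by
  have hreach (x : X) : (G.induce X).Reachable x ⟨w, hw⟩ := by
    obtain ⟨p, hp⟩ := h x x.2
    exact ⟨p.induce X hp⟩
  have : Nonempty X := ⟨⟨w, hw⟩⟩
  exact ⟨fun x y => (hreach x).trans (hreach y).symm⟩

theorem not_connected_induce_of_adj_closed {S : Set V}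
    (hS : ∀ x ∈ X ∩ S, ∀ y ∈ X, G.Adj x y → y ∈ S) (hu : u ∈ X ∩ S) (hv : v ∈ X \ S) :
    ¬ (G.induce X).Connected := by
  intro hc
  obtain ⟨p⟩ := hc.preconnected ⟨u, hu.1⟩ ⟨v, hv.1⟩
  obtain ⟨d, -, hd₁, hd₂⟩ := p.exists_boundary_dart {x | x.1 ∈ S} hu.2 hv.2
  exact hd₂ (hS _ ⟨d.fst.2, hd₁⟩ _ d.snd.2 d.adj)

def NonEdgesDominated (G : SimpleGraph V) (Y : Set V) (t w : V) : Prop :=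
  ∀ y ∈ Y, ∀ y' ∈ Y, ¬ G.Adj y y' → (G.Adj y t ∧ G.Adj y' t) ∨ (G.Adj y w ∧ G.Adj y' w)

theorem NonEdgesDominated.adj_or_adj (hD : NonEdgesDominated G Y t w)
    (hy : y ∈ Y) : G.Adj y t ∨ G.Adj y w :=
  (hD y hy y hy G.irrefl).imp And.left And.left

/-- The anticomponent of `t` in `Y` is complete to the rest of `Y`, so `t` together with any `w`
outside that anticomponent dominates the non-edges of `Y`. -/
theorem exists_nonEdgesDominated_of_not_connected_compl (hY : ¬ (Gᶜ.induce Y).Connected)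
    (ht : t ∈ Y) : ∃ w ∈ Y, G.Adj t w ∧ NonEdgesDominated G Y t w := by
  obtain ⟨w, hw, hwt⟩ : ∃ w ∈ Y, ¬ ReachIn Gᶜ Y w t := by
    by_contra! H
    exact hY (connected_induce_of_forall_reachIn ht H)
  have hcomplete {z y} (hz : z ∈ Y) (hy : y ∈ Y) (hzt : ReachIn Gᶜ Y z t)
      (hyt : ¬ ReachIn Gᶜ Y y t) : G.Adj z y := by
    by_contra hzy
    have hne : y ≠ z := by rintro rfl; exact hyt hzt
    exact hyt ((ReachIn.of_adj hy hz ((G.compl_adj y z).mpr ⟨hne, fun h => hzy h.symm⟩)).trans hzt)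
  refine ⟨w, hw, hcomplete ht hw (.refl ht) hwt, fun y hy y' hy' hyy' => ?_⟩
  by_cases hyt : ReachIn Gᶜ Y y t <;> by_cases hy't : ReachIn Gᶜ Y y' t
  · exact .inr ⟨hcomplete hy hw hyt hwt, hcomplete hy' hw hy't hwt⟩
  · exact absurd (hcomplete hy hy' hyt hy't) hyy'
  · exact absurd (hcomplete hy' hy hy't hyt).symm hyy'
  · exact .inl ⟨(hcomplete ht hy (.refl ht) hyt).symm, (hcomplete ht hy' (.refl ht) hy't).symm⟩

end Reach

section InducedPath

variable {V : Type*} {G : SimpleGraph V} {Y : Set V} {t u v w x y z : V}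

theorem IsInducedPath.reverse {p : G.Walk u v} (hp : IsInducedPath G p) :
    IsInducedPath G p.reverse :=
  ⟨hp.1.reverse, fun x hx y hy hxy => by
    simpa using hp.2 x (by simpa using hx) y (by simpa using hy) hxy⟩

theorem IsInducedPath.cons {p : G.Walk x v} (hp : IsInducedPath G p) (h : G.Adj u x)
    (hu : u ∉ p.support) (hux : ∀ z ∈ p.support, G.Adj u z → z = x) :
    IsInducedPath G (.cons h p) := by
  refine ⟨hp.1.cons hu, fun y hy z hz hyz => ?_⟩
  simp only [Walk.support_cons, List.mem_cons] at hy hz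
  simp only [Walk.edges_cons, List.mem_cons]
  rcases hy with rfl | hy <;> rcases hz with rfl | hz
  · exact absurd hyz G.irrefl
  · exact .inl (by rw [hux z hz hyz])
  · exact .inl (by rw [hux y hy hyz.symm, Sym2.eq_swap])
  · exact .inr (hp.2 y hy z hz hyz)

theorem IsInducedPath.concat {p : G.Walk u v} (hp : IsInducedPath G p) (h : G.Adj v w)
    (hw : w ∉ p.support) (hwv : ∀ z ∈ p.support, G.Adj w z → z = v) :
    IsInducedPath G (p.concat h) := by
  rw [← (p.concat h).reverse_reverse, Walk.reverse_concat]
  exact (hp.reverse.cons h.symm (by simpa using hw) (by simpa using hwv)).reverse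

theorem neighborSet_subset_support_of_ncard_eq_two {p : G.Walk u v} (hp : p.IsPath)
    (hx : Interior p x) (h2 : (G.neighborSet x).ncard = 2) :
    G.neighborSet x ⊆ {z | z ∈ p.support} := by
  obtain ⟨k, rfl, hk⟩ := Walk.mem_support_iff_exists_getVert.mp hx.1
  have hk0 : k ≠ 0 := by rintro rfl; exact hx.2.1 p.getVert_zero
  have hkl : k ≠ p.length := by rintro rfl; exact hx.2.2 p.getVert_length
  have hpred : G.Adj (p.getVert k) (p.getVert (k - 1)) := by
    simpa [Nat.sub_add_cancel (Nat.pos_of_ne_zero hk0)] using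
      (p.adj_getVert_succ (i := k - 1) (by omega)).symm
  have hne : p.getVert (k - 1) ≠ p.getVert (k + 1) := fun h =>
    absurd (hp.getVert_injOn (by simp; omega) (by simp; omega) h) (by omega)
  have hsub : {p.getVert (k - 1), p.getVert (k + 1)} ⊆ G.neighborSet (p.getVert k) := by
    simp [Set.insert_subset_iff, hpred, p.adj_getVert_succ (by omega : k < p.length)]
  rw [← Set.eq_of_subset_of_ncard_le hsub (by rw [h2, Set.ncard_pair hne])
    (Set.finite_of_ncard_ne_zero (by omega))]
  simp [Set.insert_subset_iff, Walk.getVert_mem_support]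

theorem IsInducedPath.reachIn_compl_start_or_end {p : G.Walk u v}
    (hp : IsInducedPath G p) (ht : t ∈ p.support) (hw : w ∈ p.support)
    (htY : t ∈ Y) (hwY : w ∈ Y) (htw : t = w ∨ G.Adj t w)
    (hY : ∀ y ∈ Y, y ∈ p.support → y = t ∨ G.Adj y t ∨ G.Adj y w)
    (hx : x ∈ p.support) (hxY : x ∉ Y) : ReachIn G Yᶜ x u ∨ ReachIn G Yᶜ x v := by
  classical
  -- split `p` at `x`: the vertices of `Y` on `p` are linked through `t` and `w` by edges of `p`
  -- avoiding `x`, so they all lie on the side of `t`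
  have hne : ∀ y ∈ Y, y ≠ x := fun y hy h => hxY (h ▸ hy)
  set q := p.takeUntil x hx
  have hside {y z} (hy : y ∈ Y) (hz : z ∈ Y) (hys : y ∈ p.support) (hzs : z ∈ p.support)
      (hadj : G.Adj y z) : y ∈ q.support ↔ z ∈ q.support :=
    hp.1.mem_takeUntil_iff_of_mem_edges hx (hp.2 y hys z hzs hadj) (hne y hy) (hne z hz)
  have hwt : w ∈ q.support ↔ t ∈ q.support := by
    rcases htw with rfl | h
    · rfl
    · exact (hside htY hwY ht hw h).symm
  have hsame : ∀ y ∈ Y, y ∈ p.support → (y ∈ q.support ↔ t ∈ q.support) := by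
    intro y hy hys
    rcases hY y hy hys with rfl | h | h
    · rfl
    · exact hside hy htY hys ht h
    · exact (hside hy hwY hys hw h).trans hwt
  by_cases htq : t ∈ q.support
  · refine .inr ⟨p.dropUntil x hx, fun z hz hzY => ?_⟩
    have hzp := p.support_dropUntil_subset_support hx hz
    exact hne z hzY (hp.1.eq_of_mem_takeUntil_of_mem_dropUntil hx
      ((hsame z hzY hzp).mpr htq) hz)
  · refine .inl (ReachIn.symm ⟨q, fun z hz hzY => ?_⟩)
    exact htq ((hsame z hzY (p.support_takeUntil_subset_support hx hz)).mp hz)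

end InducedPath

end BSP

namespace BSP.IsPathDoubleSplit

variable {V : Type*} {G : SimpleGraph V} {m n : ℕ} {a b : Fin m → V} {c d : Fin n → V}
  {E : Set V} {i i' : Fin m} {j j' : Fin n} {Y : Set V} {t u u' v w x y z e e' k : V}

noncomputable def path (h : IsPathDoubleSplit G m n a b c d E) (i : Fin m) :
    G.Walk (a i) (b i) :=
  (h.hpath i).exists.choose

theorem path_spec (h : IsPathDoubleSplit G m n a b c d E) (i : Fin m) :
    IsInducedPath G (h.path i) ∧ Odd (h.path i).length ∧ ∀ x, Interior (h.path i) x → x ∈ E :=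
  (h.hpath i).exists.choose_spec

theorem eq_path (h : IsPathDoubleSplit G m n a b c d E) {q : G.Walk (a i) (b i)}
    (hq : IsInducedPath G q ∧ Odd q.length ∧ ∀ x, Interior q x → x ∈ E) : q = h.path i :=
  (h.hpath i).unique hq (h.path_spec i)

theorem a_ne_b (h : IsPathDoubleSplit G m n a b c d E) (i i' : Fin m) : a i ≠ b i' :=
  h.inj.ne (a₁ := .inl (.inl i)) (a₂ := .inl (.inr i')) (by simp)

theorem c_ne_d (h : IsPathDoubleSplit G m n a b c d E) (j j' : Fin n) : c j ≠ d j' :=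
  h.inj.ne (a₁ := .inr (.inl j)) (a₂ := .inr (.inr j')) (by simp)

theorem a_injective (h : IsPathDoubleSplit G m n a b c d E) : Function.Injective a :=
  fun i i' hii => by simpa using h.inj (a₁ := .inl (.inl i)) (a₂ := .inl (.inl i')) hii

theorem b_injective (h : IsPathDoubleSplit G m n a b c d E) : Function.Injective b :=
  fun i i' hii => by simpa using h.inj (a₁ := .inl (.inr i)) (a₂ := .inl (.inr i')) hii

theorem c_injective (h : IsPathDoubleSplit G m n a b c d E) : Function.Injective c :=
  fun j j' hjj => by simpa using h.inj (a₁ := .inr (.inl j)) (a₂ := .inr (.inl j')) hjj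

theorem disjoint_pathSide_pairSide (h : IsPathDoubleSplit G m n a b c d E) :
    Disjoint (Set.range a ∪ Set.range b ∪ E) (Set.range c ∪ Set.range d) := by
  refine Set.disjoint_left.mpr fun x hx hK => ?_
  rcases hK with ⟨j, rfl⟩ | ⟨j, rfl⟩
  · rcases hx with (⟨i, e⟩ | ⟨i, e⟩) | hE
    · exact absurd (h.inj (a₁ := .inl (.inl i)) (a₂ := .inr (.inl j)) e) (by simp)
    · exact absurd (h.inj (a₁ := .inl (.inr i)) (a₂ := .inr (.inl j)) e) (by simp)
    · exact (h.notinE' j).1 hE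
  · rcases hx with (⟨i, e⟩ | ⟨i, e⟩) | hE
    · exact absurd (h.inj (a₁ := .inl (.inl i)) (a₂ := .inr (.inr j)) e) (by simp)
    · exact absurd (h.inj (a₁ := .inl (.inr i)) (a₂ := .inr (.inr j)) e) (by simp)
    · exact (h.notinE' j).2 hE

theorem pathSide_union_pairSide (h : IsPathDoubleSplit G m n a b c d E) :
    Set.range a ∪ Set.range b ∪ E ∪ (Set.range c ∪ Set.range d) = Set.univ := by
  rw [← h.cover]; ext; simp only [Set.mem_union]; tauto

theorem mem_pairSide_iff : x ∈ Set.range c ∪ Set.range d ↔ ∃ j, x ∈ s(c j, d j) := by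
  simp only [Set.mem_union, Set.mem_range, Sym2.mem_iff]
  grind

theorem mem_path_support (h : IsPathDoubleSplit G m n a b c d E)
    (hx : x ∈ (h.path i).support) : x ∈ s(a i, b i) ∨ x ∈ E := by
  by_cases hab : x = a i ∨ x = b i
  · exact .inl (Sym2.mem_iff.mpr hab)
  · exact .inr ((h.path_spec i).2.2 x ⟨hx, not_or.mp hab⟩)

theorem mem_pathSide_of_mem_path (h : IsPathDoubleSplit G m n a b c d E)
    (hx : x ∈ (h.path i).support) : x ∈ Set.range a ∪ Set.range b ∪ E := by
  rcases h.mem_path_support hx with hx | hE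
  · rcases Sym2.mem_iff.mp hx with rfl | rfl
    exacts [.inl (.inl ⟨i, rfl⟩), .inl (.inr ⟨i, rfl⟩)]
  · exact .inr hE

theorem mem_path_of_mem_E_of_adj (h : IsPathDoubleSplit G m n a b c d E) (hv : v ∈ E)
    (hvi : v ∈ (h.path i).support) (hvy : G.Adj v y) : y ∈ (h.path i).support :=
  neighborSet_subset_support_of_ncard_eq_two (h.path_spec i).1.1
    ⟨hvi, fun e => (h.notinE i).1 (e ▸ hv), fun e => (h.notinE i).2 (e ▸ hv)⟩ (h.hE v hv).1 hvy

theorem exists_mem_path_of_mem_E (h : IsPathDoubleSplit G m n a b c d E) (hv : v ∈ E) :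
    ∃ i, v ∈ (h.path i).support := by
  obtain ⟨-, i, p, hp, hodd, hint, hvp⟩ := h.hE v hv
  exact ⟨i, h.eq_path ⟨hp, hodd, hint⟩ ▸ hvp⟩

theorem exists_mem_path (h : IsPathDoubleSplit G m n a b c d E)
    (hx : x ∈ Set.range a ∪ Set.range b ∪ E) : ∃ i, x ∈ (h.path i).support := by
  rcases hx with (⟨i, rfl⟩ | ⟨i, rfl⟩) | hE
  exacts [⟨i, (h.path i).start_mem_support⟩, ⟨i, (h.path i).end_mem_support⟩,
    h.exists_mem_path_of_mem_E hE]

theorem end_mem_path (h : IsPathDoubleSplit G m n a b c d E) (he : e ∈ s(a i, b i)) :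
    e ∈ (h.path i).support := by
  rcases Sym2.mem_iff.mp he with rfl | rfl
  exacts [(h.path i).start_mem_support, (h.path i).end_mem_support]

theorem exists_mem_path_or_mem_pair (h : IsPathDoubleSplit G m n a b c d E) (x : V) :
    (∃ i, x ∈ (h.path i).support) ∨ ∃ j, x ∈ s(c j, d j) := by
  have hx : x ∈ Set.range a ∪ Set.range b ∪ E ∪ (Set.range c ∪ Set.range d) :=
    h.pathSide_union_pairSide ▸ Set.mem_univ x
  rcases hx with hx | hx
  exacts [.inl (h.exists_mem_path hx), .inr (mem_pairSide_iff.mp hx)]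

theorem end_not_mem_path (h : IsPathDoubleSplit G m n a b c d E) (he : e ∈ s(a i, b i))
    (hii : i ≠ i') : e ∉ (h.path i').support := by
  intro hei
  rcases h.mem_path_support hei with he' | hE <;> rcases Sym2.mem_iff.mp he with rfl | rfl
  · rcases Sym2.mem_iff.mp he' with he' | he'
    exacts [hii (h.a_injective he'), h.a_ne_b _ _ he']
  · rcases Sym2.mem_iff.mp he' with he' | he'
    exacts [h.a_ne_b _ _ he'.symm, hii (h.b_injective he')]
  · exact (h.notinE i).1 hE
  · exact (h.notinE i).2 hE

theorem not_mem_path_of_ne (h : IsPathDoubleSplit G m n a b c d E) (hii : i ≠ i')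
    (hx : x ∈ (h.path i).support) : x ∉ (h.path i').support := by
  classical
  intro hx'
  -- walking from `a i` to `x` we enter path `i'` through a vertex of `E`, all of whose
  -- neighbours lie on path `i'`
  obtain ⟨dt, hdt, hd₁, hd₂⟩ := ((h.path i).takeUntil x hx).exists_boundary_dart
    {z | z ∉ (h.path i').support} (h.end_not_mem_path (Sym2.mem_mk_left _ _) hii) (not_not.mpr hx')
  simp only [Set.mem_ofPred_eq, not_not] at hd₁ hd₂
  have hsnd := (h.path i).support_takeUntil_subset_support hx
    (Walk.dart_snd_mem_support_of_mem_darts _ hdt)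
  rcases h.mem_path_support hsnd with he | hE
  · exact h.end_not_mem_path he hii hd₂
  · exact hd₁ (h.mem_path_of_mem_E_of_adj hE hd₂ dt.adj.symm)

theorem not_adj_of_mem_ends (h : IsPathDoubleSplit G m n a b c d E) (hii : i ≠ i')
    (he : e ∈ s(a i, b i)) (he' : e' ∈ s(a i', b i')) : ¬ G.Adj e e' := by
  rcases Sym2.mem_iff.mp he with rfl | rfl <;> rcases Sym2.mem_iff.mp he' with rfl | rfl
  · exact (h.habne i i' hii).1
  · exact (h.habne i i' hii).2.1
  · exact fun hadj => (h.habne i' i hii.symm).2.1 hadj.symm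
  · exact (h.habne i i' hii).2.2

theorem mem_path_of_adj (h : IsPathDoubleSplit G m n a b c d E)
    (hx : x ∈ (h.path i).support) (hy : y ∈ Set.range a ∪ Set.range b ∪ E)
    (hxy : G.Adj x y) : y ∈ (h.path i).support := by
  obtain ⟨i', hy'⟩ := h.exists_mem_path hy
  by_cases hii : i = i'
  · exact hii ▸ hy'
  rcases h.mem_path_support hx with hxe | hxE
  · rcases h.mem_path_support hy' with hye | hyE
    · exact absurd hxy (h.not_adj_of_mem_ends hii hxe hye)
    · exact absurd (h.mem_path_of_mem_E_of_adj hyE hy' hxy.symm) (h.not_mem_path_of_ne hii hx)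
  · exact h.mem_path_of_mem_E_of_adj hxE hx hxy

theorem adj_of_ne (h : IsPathDoubleSplit G m n a b c d E) (hjj : j ≠ j')
    (hu : u ∈ s(c j, d j)) (hv : v ∈ s(c j', d j')) : G.Adj u v := by
  obtain ⟨h₁, h₂, h₃⟩ := h.hcdall j j' hjj
  obtain ⟨-, h₄, -⟩ := h.hcdall j' j hjj.symm
  rcases Sym2.mem_iff.mp hu with rfl | rfl <;> rcases Sym2.mem_iff.mp hv with rfl | rfl
  exacts [h₁, h₂, h₄.symm, h₃]

theorem not_adj_of_mem_pair (h : IsPathDoubleSplit G m n a b c d E)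
    (hu : u ∈ s(c j, d j)) (hv : v ∈ s(c j, d j)) : ¬ G.Adj u v := by
  rcases Sym2.mem_iff.mp hu with rfl | rfl <;> rcases Sym2.mem_iff.mp hv with rfl | rfl
  exacts [G.irrefl, h.hcd j, fun h' => h.hcd j h'.symm, G.irrefl]

theorem not_mem_path_of_mem_pair (h : IsPathDoubleSplit G m n a b c d E)
    (hu : u ∈ s(c j, d j)) : u ∉ (h.path i).support := fun hui =>
  Set.disjoint_left.mp h.disjoint_pathSide_pairSide (h.mem_pathSide_of_mem_path hui)
    (mem_pairSide_iff.mpr ⟨j, hu⟩)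

theorem not_adj_of_mem_E (h : IsPathDoubleSplit G m n a b c d E) (hu : u ∈ s(c j, d j))
    (hv : v ∈ E) : ¬ G.Adj u v := fun huv => by
  obtain ⟨i, hvi⟩ := h.exists_mem_path_of_mem_E hv
  exact h.not_mem_path_of_mem_pair hu (h.mem_path_of_mem_E_of_adj hv hvi huv.symm)

theorem cross_adj (h : IsPathDoubleSplit G m n a b c d E) (hu : s(u, u') = s(c j, d j))
    (he : s(e, e') = s(a i, b i)) :
    (G.Adj u e ∧ G.Adj u' e' ∧ ¬G.Adj u e' ∧ ¬G.Adj u' e) ∨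
      (G.Adj u e' ∧ G.Adj u' e ∧ ¬G.Adj u e ∧ ¬G.Adj u' e') := by
  have := h.cross i j
  rcases Sym2.eq_iff.mp hu with ⟨rfl, rfl⟩ | ⟨rfl, rfl⟩ <;>
    rcases Sym2.eq_iff.mp he with ⟨rfl, rfl⟩ | ⟨rfl, rfl⟩ <;>
    simp only [G.adj_comm (c j), G.adj_comm (d j)] <;> tauto

theorem exists_adj_ends (h : IsPathDoubleSplit G m n a b c d E) (hu : s(u, u') = s(c j, d j))
    (i : Fin m) : ∃ e e', s(e, e') = s(a i, b i) ∧ G.Adj u e ∧ G.Adj u' e' := by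
  rcases h.cross_adj hu rfl with ⟨h₁, h₂, -⟩ | ⟨h₁, h₂, -⟩
  exacts [⟨a i, b i, rfl, h₁, h₂⟩, ⟨b i, a i, Sym2.eq_swap, h₁, h₂⟩]

theorem exists_adj_of_mem_ends (h : IsPathDoubleSplit G m n a b c d E) (he : e ∈ s(a i, b i))
    (j : Fin n) : ∃ u ∈ s(c j, d j), G.Adj e u := by
  obtain ⟨e₁, e₂, he₁₂, h₁, h₂⟩ := h.exists_adj_ends (rfl : s(c j, d j) = _) i
  rcases Sym2.mem_iff.mp (he₁₂ ▸ he) with rfl | rfl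
  exacts [⟨c j, Sym2.mem_mk_left _ _, h₁.symm⟩, ⟨d j, Sym2.mem_mk_right _ _, h₂.symm⟩]

theorem mem_ends_of_adj (h : IsPathDoubleSplit G m n a b c d E) (hu : u ∈ s(c j, d j))
    (hx : x ∈ (h.path i).support) (hux : G.Adj u x) : x ∈ s(a i, b i) :=
  (h.mem_path_support hx).resolve_right fun hxE => h.not_adj_of_mem_E hu hxE hux

theorem not_adj_of_adj_partner (h : IsPathDoubleSplit G m n a b c d E)
    (hu : s(u, u') = s(c j, d j)) (hx : x ∈ (h.path i).support) (hux : G.Adj u x) :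
    ¬ G.Adj u' x := by
  have hxe := h.mem_ends_of_adj (hu ▸ Sym2.mem_mk_left _ _) hx hux
  rcases h.cross_adj hu (Sym2.other_spec hxe) with ⟨-, -, -, h'⟩ | ⟨-, -, h', -⟩
  exacts [h', absurd hux h']

theorem eq_of_mem_pair_of_adj_of_adj (h : IsPathDoubleSplit G m n a b c d E) (hu : u ∈ s(c j, d j))
    (hx : x ∈ (h.path i).support) (hy : y ∈ (h.path i).support) (hux : G.Adj u x)
    (huy : G.Adj u y) : x = y := by
  by_contra hxy
  have hxy' := (Sym2.mem_and_mem_iff hxy).mp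
    ⟨h.mem_ends_of_adj hu hx hux, h.mem_ends_of_adj hu hy huy⟩
  rcases h.cross_adj (Sym2.other_spec hu) hxy'.symm with ⟨-, -, h', -⟩ | ⟨-, -, h', -⟩
  exacts [h' huy, h' hux]

theorem isSkewPartition (h : IsPathDoubleSplit G m n a b c d E) :
    IsSkewPartition G (Set.range a ∪ Set.range b ∪ E) (Set.range c ∪ Set.range d) := by
  have := h.hm
  have := h.hn
  let i₀ : Fin m := ⟨0, by omega⟩
  let j₀ : Fin n := ⟨0, by omega⟩
  let j₁ : Fin n := ⟨1, by omega⟩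
  refine ⟨⟨a i₀, .inl (.inl ⟨i₀, rfl⟩)⟩, ⟨c j₀, .inl ⟨j₀, rfl⟩⟩,
    h.disjoint_pathSide_pairSide, h.pathSide_union_pairSide, ?_, ?_⟩
  · exact not_connected_induce_of_adj_closed (S := {x | x ∈ (h.path i₀).support})
      (fun x hx y hy hxy => h.mem_path_of_adj hx.2 hy hxy)
      ⟨.inl (.inl ⟨i₀, rfl⟩), (h.path i₀).start_mem_support⟩
      ⟨.inl (.inl ⟨⟨1, by omega⟩, rfl⟩),
        h.end_not_mem_path (Sym2.mem_mk_left _ _) (by simp [i₀, Fin.ext_iff])⟩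
  · refine not_connected_induce_of_adj_closed (S := {x | x ∈ s(c j₀, d j₀)}) ?_
      ⟨.inl ⟨j₀, rfl⟩, Sym2.mem_mk_left _ _⟩ ⟨.inl ⟨j₁, rfl⟩, ?_⟩
    · intro x hx y hy hxy
      obtain ⟨j, hyj⟩ := mem_pairSide_iff.mp hy
      by_contra hy₀
      have hj : j₀ ≠ j := by rintro rfl; exact hy₀ hyj
      exact ((G.compl_adj _ _).mp hxy).2 (h.adj_of_ne hj hx.2 hyj)
    · simp [Sym2.mem_iff, h.c_injective.eq_iff, h.c_ne_d, j₀, j₁]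

theorem exists_induced_path_extending_path (h : IsPathDoubleSplit G m n a b c d E)
    (huv : s(u, v) = s(c j, d j)) (hua : G.Adj u (a i)) :
    ∃ q : G.Walk u v, IsInducedPath G q ∧ q.length = (h.path i).length + 2 ∧
      ∀ z, Interior q z → z ∈ (h.path i).support := by
  have hu : u ∈ s(c j, d j) := huv ▸ Sym2.mem_mk_left _ _
  have hv : v ∈ s(c j, d j) := huv ▸ Sym2.mem_mk_right _ _
  have hvb : G.Adj (b i) v := by
    rcases h.cross_adj huv rfl with ⟨-, h', -⟩ | ⟨-, -, h', -⟩
    exacts [h'.symm, absurd hua h']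
  have huv' : u ≠ v := fun e =>
    h.c_ne_d j j (Sym2.mk_isDiag_iff.mp (huv ▸ Sym2.mk_isDiag_iff.mpr e))
  have hind := (h.path_spec i).1.concat hvb (h.not_mem_path_of_mem_pair hv)
    fun z hz hvz => h.eq_of_mem_pair_of_adj_of_adj hv hz (h.path i).end_mem_support hvz hvb.symm
  refine ⟨.cons hua ((h.path i).concat hvb), hind.cons hua ?_ ?_, by simp, ?_⟩
  · simpa [Walk.support_concat] using ⟨h.not_mem_path_of_mem_pair hu, huv'⟩
  · intro z hz huz
    simp only [Walk.support_concat, List.mem_append, List.mem_singleton] at hz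
    rcases hz with hz | rfl
    · exact h.eq_of_mem_pair_of_adj_of_adj hu hz (h.path i).start_mem_support huz hua
    · exact absurd huz (h.not_adj_of_mem_pair hu hv)
  · rintro z ⟨hz, hzu, hzv⟩
    simpa [Walk.support_concat, hzu, hzv] using hz

theorem not_isBalancedSkewPartition (h : IsPathDoubleSplit G m n a b c d E) :
    ¬ IsBalancedSkewPartition G (Set.range a ∪ Set.range b ∪ E) (Set.range c ∪ Set.range d) := by
  rintro ⟨-, hbal, -⟩
  have := h.hm
  have := h.hn
  let i₀ : Fin m := ⟨0, by omega⟩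
  let j₀ : Fin n := ⟨0, by omega⟩
  obtain ⟨u, v, huv, hua⟩ : ∃ u v, s(u, v) = s(c j₀, d j₀) ∧ G.Adj u (a i₀) := by
    rcases h.cross i₀ j₀ with ⟨h₁, -⟩ | ⟨h₁, -⟩
    exacts [⟨c j₀, d j₀, rfl, h₁.symm⟩, ⟨d j₀, c j₀, Sym2.eq_swap, h₁.symm⟩]
  obtain ⟨q, hq, hlen, hint⟩ := h.exists_induced_path_extending_path huv hua
  have hodd : Odd q.length := hlen ▸ (h.path_spec i₀).2.1.add_even even_two
  exact Nat.not_even_iff_odd.mpr hodd (hbal u v q hq (by omega)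
    (mem_pairSide_iff.mpr ⟨j₀, huv ▸ Sym2.mem_mk_left _ _⟩)
    (mem_pairSide_iff.mpr ⟨j₀, huv ▸ Sym2.mem_mk_right _ _⟩)
    fun z hz => h.mem_pathSide_of_mem_path (hint z hz))

theorem reachIn_of_path_subset (h : IsPathDoubleSplit G m n a b c d E)
    (hY : ∀ z ∈ (h.path i).support, z ∈ Yᶜ) (hk : k ∈ s(c j, d j)) (hkY : k ∉ Y)
    (hx : x ∈ (h.path i).support) : ReachIn G Yᶜ x k := by
  obtain ⟨e, _, he, hke, -⟩ := h.exists_adj_ends (Sym2.other_spec hk) i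
  have hei := h.end_mem_path (he ▸ Sym2.mem_mk_left _ _)
  exact (reachIn_of_mem_support _ hY hx hei).trans (.of_adj (hY e hei) hkY hke.symm)

theorem connected_induce_compl_of_subset_pairSide (h : IsPathDoubleSplit G m n a b c d E)
    (hYK : Y ⊆ Set.range c ∪ Set.range d) (hw : w ∈ s(c j, d j)) (hwY : w ∉ Y) :
    (G.induce Yᶜ).Connected := by
  have hpath (i) : ∀ z ∈ (h.path i).support, z ∈ Yᶜ := fun z hz hzY =>
    Set.disjoint_left.mp h.disjoint_pathSide_pairSide (h.mem_pathSide_of_mem_path hz) (hYK hzY)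
  refine connected_induce_of_forall_reachIn hwY fun x hxY => ?_
  rcases h.exists_mem_path_or_mem_pair x with ⟨i, hx⟩ | ⟨j', hx⟩
  · exact h.reachIn_of_path_subset (hpath i) hw hwY hx
  · obtain ⟨e, _, he, hxe, -⟩ := h.exists_adj_ends (Sym2.other_spec hx) ⟨0, by have := h.hm; omega⟩
    have hei := h.end_mem_path (he ▸ Sym2.mem_mk_left _ _)
    exact (ReachIn.of_adj hxY (hpath _ e hei) hxe).trans
      (h.reachIn_of_path_subset (hpath _) hw hwY hei)

theorem not_mem_of_forall_adj_or_adj (h : IsPathDoubleSplit G m n a b c d E)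
    (hYtw : ∀ y ∈ Y, G.Adj y t ∨ G.Adj y w) (ht : t ∈ (h.path i).support)
    (hw : w ∈ (h.path i).support) (hi' : i' ≠ i) (hz : z ∈ (h.path i').support) : z ∉ Y := by
  intro hzY
  have hzT := h.mem_pathSide_of_mem_path hz
  refine h.not_mem_path_of_ne hi' hz ?_
  rcases hYtw z hzY with hzt | hzw
  exacts [h.mem_path_of_adj ht hzT hzt.symm, h.mem_path_of_adj hw hzT hzw.symm]

theorem exists_adj_not_mem_of_forall_adj_or_adj (h : IsPathDoubleSplit G m n a b c d E)
    (hYtw : ∀ y ∈ Y, G.Adj y t ∨ G.Adj y w) (ht : t ∈ (h.path i).support)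
    (hw : w ∈ (h.path i).support) (htY : t ∈ Y) (hwY : w ∈ Y) (he : e ∈ s(a i, b i))
    (heY : e ∉ Y) (j : Fin n) : ∃ u ∈ s(c j, d j), u ∉ Y ∧ G.Adj e u := by
  obtain ⟨u, hu, heu⟩ := h.exists_adj_of_mem_ends he j
  refine ⟨u, hu, fun huY => ?_, heu⟩
  have hei := h.end_mem_path he
  rcases hYtw u huY with hut | huw
  · exact heY (h.eq_of_mem_pair_of_adj_of_adj hu ht hei hut heu.symm ▸ htY)
  · exact heY (h.eq_of_mem_pair_of_adj_of_adj hu hw hei huw heu.symm ▸ hwY)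

theorem exists_mem_pair_not_mem_of_dominated (h : IsPathDoubleSplit G m n a b c d E)
    (hD : NonEdgesDominated G Y t w) (ht : t ∈ (h.path i).support)
    (hw : w ∈ (h.path i).support) (j : Fin n) : ∃ k ∈ s(c j, d j), k ∉ Y := by
  by_contra! H
  -- a vertex of a path sees at most one vertex of each pair
  rcases hD _ (H _ (Sym2.mem_mk_left _ _)) _ (H _ (Sym2.mem_mk_right _ _)) (h.hcd j) with
    ⟨h₁, h₂⟩ | ⟨h₁, h₂⟩
  exacts [h.not_adj_of_adj_partner rfl ht h₁ h₂, h.not_adj_of_adj_partner rfl hw h₁ h₂]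

/-- A vertex `k` of a pair outside `Y` serves as the hub: the other paths avoid `Y`, and a vertex
of path `i` outside `Y` reaches an end of that path none of whose pair neighbours is in `Y`. -/
theorem connected_induce_compl_of_dominated_of_mem_path (h : IsPathDoubleSplit G m n a b c d E)
    (ht : t ∈ (h.path i).support) (hw : w ∈ (h.path i).support) (htY : t ∈ Y) (hwY : w ∈ Y)
    (htw : G.Adj t w) (hD : NonEdgesDominated G Y t w) : (G.induce Yᶜ).Connected := by
  have hYtw (y) (hy : y ∈ Y) := hD.adj_or_adj hy
  have hout {i'} (hi' : i' ≠ i) : ∀ z ∈ (h.path i').support, z ∈ Yᶜ :=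
    fun _ => h.not_mem_of_forall_adj_or_adj hYtw ht hw hi'
  have := h.hn
  let j₀ : Fin n := ⟨0, by omega⟩
  obtain ⟨k, hk, hkY⟩ := h.exists_mem_pair_not_mem_of_dominated hD ht hw j₀
  have : Nontrivial (Fin m) := Fin.nontrivial_iff_two_le.mpr h.hm
  obtain ⟨i', hi'⟩ := exists_ne i
  have hK {u j'} (hu : u ∈ s(c j', d j')) (huY : u ∉ Y) : ReachIn G Yᶜ u k := by
    obtain ⟨e, _, he, hue, -⟩ := h.exists_adj_ends (Sym2.other_spec hu) i'
    have hei := h.end_mem_path (he ▸ Sym2.mem_mk_left _ _)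
    exact (ReachIn.of_adj huY (hout hi' e hei) hue).trans
      (h.reachIn_of_path_subset (hout hi') hk hkY hei)
  refine connected_induce_of_forall_reachIn hkY fun x hxY => ?_
  rcases h.exists_mem_path_or_mem_pair x with ⟨i'', hx⟩ | ⟨j', hx⟩
  · by_cases hi : i'' = i
    · subst hi
      have hend {e} (he : e ∈ s(a i'', b i'')) (hxe : ReachIn G Yᶜ x e) : ReachIn G Yᶜ x k := by
        obtain ⟨u, hu, huY, heu⟩ := h.exists_adj_not_mem_of_forall_adj_or_adj hYtw ht hw htY hwY
          he hxe.mem_right j₀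
        exact hxe.trans ((ReachIn.of_adj hxe.mem_right huY heu).trans (hK hu huY))
      rcases (h.path_spec i'').1.reachIn_compl_start_or_end ht hw htY hwY (.inr htw)
        (fun y hy _ => .inr (hYtw y hy)) hx hxY with hr | hr
      exacts [hend (Sym2.mem_mk_left _ _) hr, hend (Sym2.mem_mk_right _ _) hr]
    · exact h.reachIn_of_path_subset (hout hi) hk hkY hx
  · exact hK hx hxY

theorem reachIn_compl_other_end (h : IsPathDoubleSplit G m n a b c d E)
    (hee' : s(e, e') = s(a i, b i))
    (hYe : ∀ y ∈ Y, y ∈ (h.path i).support → y = e ∨ (e ∈ Y ∧ G.Adj y e))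
    (hx : x ∈ (h.path i).support) (hxY : x ∉ Y) : ReachIn G Yᶜ x e' := by
  by_cases heY : e ∈ Y
  · have hei := h.end_mem_path (hee' ▸ Sym2.mem_mk_left _ _)
    have hr := (h.path_spec i).1.reachIn_compl_start_or_end hei hei heY heY (.inl rfl)
      (fun y hy hyi => (hYe y hy hyi).imp_right fun h' => .inl h'.2) hx hxY
    rcases Sym2.eq_iff.mp hee' with ⟨rfl, rfl⟩ | ⟨rfl, rfl⟩
    · exact hr.resolve_left fun hr => hr.mem_right heY
    · exact hr.resolve_right fun hr => hr.mem_right heY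
  · refine reachIn_of_mem_support _ (fun y hyi hyY => ?_) hx
      (h.end_mem_path (hee' ▸ Sym2.mem_mk_right _ _))
    rcases hYe y hyY hyi with rfl | ⟨he, -⟩
    exacts [heY hyY, heY he]

/-- The partner `w'` of `w` lies outside `Y` and serves as the hub: on every path, the vertices
of `Y` sit next to the end seen by `w`, so the opposite end, which `w'` sees, is reachable. -/
theorem connected_induce_compl_of_dominated_of_mem_pair (h : IsPathDoubleSplit G m n a b c d E)
    (ht : t ∈ (h.path i).support) (hw : w ∈ s(c j, d j)) (htY : t ∈ Y) (hwY : w ∈ Y)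
    (htw : G.Adj t w) (hD : NonEdgesDominated G Y t w) : (G.induce Yᶜ).Connected := by
  obtain ⟨w', hww'⟩ : ∃ w', s(w, w') = s(c j, d j) := ⟨_, Sym2.other_spec hw⟩
  have hw' : w' ∈ s(c j, d j) := hww' ▸ Sym2.mem_mk_right _ _
  have hw'Y : w' ∉ Y := fun hw'Y => (hD.adj_or_adj hw'Y).elim
    (h.not_adj_of_adj_partner hww' ht htw.symm) (h.not_adj_of_mem_pair hw' hw)
  refine connected_induce_of_forall_reachIn hw'Y fun x hxY => ?_
  rcases h.exists_mem_path_or_mem_pair x with ⟨i', hx⟩ | ⟨j', hx⟩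
  · obtain ⟨e, e', hee', hwe, hw'e'⟩ := h.exists_adj_ends hww' i'
    have hei := h.end_mem_path (hee' ▸ Sym2.mem_mk_left _ _)
    have hr := h.reachIn_compl_other_end hee' (fun y hyY hyi => ?_) hx hxY
    · exact hr.trans (.of_adj hr.mem_right hw'Y hw'e'.symm)
    rcases hD.adj_or_adj hyY with hyt | hyw
    · obtain rfl : i = i' := by
        by_contra hii
        exact h.not_mem_path_of_ne hii
          (h.mem_path_of_adj ht (h.mem_pathSide_of_mem_path hyi) hyt.symm) hyi
      obtain rfl : t = e := h.eq_of_mem_pair_of_adj_of_adj hw ht hei htw.symm hwe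
      exact .inr ⟨htY, hyt⟩
    · exact .inl (h.eq_of_mem_pair_of_adj_of_adj hw hyi hei hyw.symm hwe)
  · by_cases hj : j' = j
    · subst hj
      rcases Sym2.mem_iff.mp (hww' ▸ hx) with rfl | rfl
      exacts [absurd hwY hxY, .refl hw'Y]
    · exact .of_adj hxY hw'Y (h.adj_of_ne hj hx hw')

theorem connected_induce_compl_of_dominated (h : IsPathDoubleSplit G m n a b c d E)
    (ht : t ∈ (h.path i).support) (htY : t ∈ Y) (hwY : w ∈ Y) (htw : G.Adj t w)
    (hD : NonEdgesDominated G Y t w) : (G.induce Yᶜ).Connected := by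
  rcases h.exists_mem_path_or_mem_pair w with ⟨i', hw⟩ | ⟨j, hw⟩
  · exact h.connected_induce_compl_of_dominated_of_mem_path ht
      (h.mem_path_of_adj ht (h.mem_pathSide_of_mem_path hw) htw) htY hwY htw hD
  · exact h.connected_induce_compl_of_dominated_of_mem_pair ht hw htY hwY htw hD

theorem eq_of_isSkewPartition (h : IsPathDoubleSplit G m n a b c d E) {X : Set V}
    (hXY : IsSkewPartition G X Y) :
    X = Set.range a ∪ Set.range b ∪ E ∧ Y = Set.range c ∪ Set.range d := by
  obtain ⟨-, -, hdisj, hunion, hX, hY⟩ := hXY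
  obtain rfl : X = Yᶜ := eq_compl_iff_isCompl.mpr ⟨hdisj, codisjoint_iff.mpr hunion⟩
  have hYK : Y ⊆ Set.range c ∪ Set.range d := by
    intro t htY
    rcases h.exists_mem_path_or_mem_pair t with ⟨i, ht⟩ | ⟨j, ht⟩
    · obtain ⟨w, hwY, htw, hD⟩ := exists_nonEdgesDominated_of_not_connected_compl hY htY
      exact absurd (h.connected_induce_compl_of_dominated ht htY hwY htw hD) hX
    · exact mem_pairSide_iff.mpr ⟨j, ht⟩
  have hKY : Set.range c ∪ Set.range d ⊆ Y := by
    intro w hw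
    by_contra hwY
    obtain ⟨j, hw⟩ := mem_pairSide_iff.mp hw
    exact hX (h.connected_induce_compl_of_subset_pairSide hYK hw hwY)
  obtain rfl := hYK.antisymm hKY
  exact ⟨(eq_compl_iff_isCompl.mpr ⟨h.disjoint_pathSide_pairSide,
    codisjoint_iff.mpr h.pathSide_union_pairSide⟩).symm, rfl⟩

end BSP.IsPathDoubleSplit

/-- A path-double split graph has exactly one skew partition, namely
`(A ∪ B ∪ E, C ∪ D)`, and this skew partition is not balanced. -/
theorem path_double_split_unique_skew_partition {V : Type*} (G : SimpleGraph V)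
    (m n : ℕ) (a b : Fin m → V) (c d : Fin n → V) (E : Set V)
    (h : BSP.IsPathDoubleSplit G m n a b c d E) :
    BSP.IsSkewPartition G (Set.range a ∪ Set.range b ∪ E)
      (Set.range c ∪ Set.range d) ∧
    ¬ BSP.IsBalancedSkewPartition G (Set.range a ∪ Set.range b ∪ E)
      (Set.range c ∪ Set.range d) ∧
    (∀ X Y : Set V, BSP.IsSkewPartition G X Y →
      X = Set.range a ∪ Set.range b ∪ E ∧ Y = Set.range c ∪ Set.range d) :=
  ⟨h.isSkewPartition, h.not_isBalancedSkewPartition, fun _ _ => h.eq_of_isSkewPartition⟩
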